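/- arXiv:1311.5845 — 4 statements merged into one kernel-verified Lean document; each statement's English description precedes it below -/
import Mathlib

section
/- Let P be a partition (a weakly decreasing, eventually zero sequence of nonnegative integers P_0 ≥ P_1 ≥ ⋯) and Λ an arithmetic progression (a proper subset of ℤ whose set of differences is closed under addition). Then the downward displacement P⁻_Λ and upward displacement P⁺_Λ are again partitions (weakly decreasing, eventually zero), and P⁻_Λ ≤ P ≤ P⁺_Λ termwise. -/
open scoped Classical

/-- A partition: weakly decreasing, eventually zero sequence of nonnegative integers. -/
def IsPartition (P : ℕ → ℕ) : Prop :=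
  (∀ i, P (i + 1) ≤ P i) ∧ ∃ N, ∀ n ≥ N, P n = 0

/-- An arithmetic progression: a proper subset of ℤ whose set of differences is
closed under addition. -/
def IsAP (Λ : Set ℤ) : Prop :=
  Λ ≠ Set.univ ∧
    ∀ a b c d : ℤ, a ∈ Λ → b ∈ Λ → c ∈ Λ → d ∈ Λ →
      ∃ x ∈ Λ, ∃ y ∈ Λ, x - y = (a - b) + (c - d)

/-- Upward displacement of a partition with respect to an arithmetic progression.
The convention `P_{-1} = ∞` is encoded by the disjunct `i = 0`. -/
noncomputable def upDisp (P : ℕ → ℕ) (Λ : Set ℤ) : ℕ → ℕ :=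
  fun i => if ((P i : ℤ) - i) ∈ Λ ∧ (i = 0 ∨ P i < P (i - 1)) then P i + 1 else P i

/-- Downward displacement of a partition with respect to an arithmetic progression. -/
noncomputable def downDisp (P : ℕ → ℕ) (Λ : Set ℤ) : ℕ → ℕ :=
  fun i => if ((P i : ℤ) - i - 1) ∈ Λ ∧ P (i + 1) < P i then P i - 1 else P i

/-- The sum `|P|` of the parts of a partition. -/
noncomputable def psum (P : ℕ → ℕ) : ℕ := ∑ᶠ i, P i

/-- Two partitions are linked if some arithmetic progression displaces one to the other. -/
def Linked (P Q : ℕ → ℕ) : Prop :=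
  ∃ Λ : Set ℤ, IsAP Λ ∧ Q = upDisp P Λ ∧ P = downDisp Q Λ

/-- `k`-linked: linked with sums differing by `k`. -/
def KLinked (k : ℕ) (P Q : ℕ → ℕ) : Prop :=
  Linked P Q ∧ psum Q = psum P + k

/-- A valid sequence of partitions: adjacent pairs are 1-linked or 2-linked. -/
def ValidSeq (n : ℕ) (s : ℕ → ℕ → ℕ) : Prop :=
  (∀ j ≤ n, IsPartition (s j)) ∧
    ∀ j < n, KLinked 1 (s j) (s (j + 1)) ∨ KLinked 2 (s j) (s (j + 1))

/-- The difficulty `δ(P)`: the least number of 1-linked adjacent pairs in a valid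
sequence from the empty partition to `P`. -/
noncomputable def delta (P : ℕ → ℕ) : ℕ :=
  sInf { c | ∃ n s, ValidSeq n s ∧ s 0 = (fun _ => 0) ∧ s n = P ∧
    c = ((Finset.range n).filter fun j => KLinked 1 (s j) (s (j + 1))).card }

/-- The conjugate (dual) partition: `P*_n = #{m : P_m > n}`. -/
noncomputable def conj (P : ℕ → ℕ) : ℕ → ℕ := fun n => Set.ncard { m | n < P m }

section Displacement

variable {P : ℕ → ℕ} {Λ : Set ℤ}

theorem downDisp_le (i : ℕ) : downDisp P Λ i ≤ P i := by
  unfold downDisp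
  split_ifs <;> omega

theorem le_upDisp (i : ℕ) : P i ≤ upDisp P Λ i := by
  unfold upDisp
  split_ifs <;> omega

/-- A part is lowered only where it strictly exceeds the next one, so the order survives. -/
theorem downDisp_succ_le {i : ℕ} (h : P (i + 1) ≤ P i) :
    downDisp P Λ (i + 1) ≤ downDisp P Λ i := by
  unfold downDisp
  split_ifs <;> omega

/-- A part is raised only where it is strictly below the previous one, so the order survives. -/
theorem upDisp_succ_le {i : ℕ} (h : P (i + 1) ≤ P i) :
    upDisp P Λ (i + 1) ≤ upDisp P Λ i := by
  unfold upDisp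
  simp only [Nat.add_sub_cancel, Nat.add_one_ne_zero, false_or]
  split_ifs <;> omega

theorem upDisp_eq_zero {n : ℕ} (hn : n ≠ 0) (h : P n = 0) (hpred : P (n - 1) = 0) :
    upDisp P Λ n = 0 := by
  unfold upDisp
  split_ifs <;> omega

theorem IsPartition.downDisp (hP : IsPartition P) (Λ : Set ℤ) :
    IsPartition (downDisp P Λ) := by
  obtain ⟨hmono, N, hN⟩ := hP
  exact ⟨fun i => downDisp_succ_le (hmono i),
    N, fun n hn => Nat.eq_zero_of_le_zero (hN n hn ▸ downDisp_le n)⟩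

theorem IsPartition.upDisp (hP : IsPartition P) (Λ : Set ℤ) :
    IsPartition (upDisp P Λ) := by
  obtain ⟨hmono, N, hN⟩ := hP
  exact ⟨fun i => upDisp_succ_le (hmono i),
    N + 1, fun n hn => upDisp_eq_zero (by omega) (hN n (by omega)) (hN (n - 1) (by omega))⟩

end Displacement

theorem stmt0_general (P : ℕ → ℕ) (Λ : Set ℤ) (hP : IsPartition P) :
    IsPartition (downDisp P Λ) ∧ IsPartition (upDisp P Λ) ∧
      (∀ i, downDisp P Λ i ≤ P i) ∧ (∀ i, P i ≤ upDisp P Λ i) :=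
  ⟨hP.downDisp Λ, hP.upDisp Λ, downDisp_le, le_upDisp⟩

/-- Displacements of a partition are partitions, and `P⁻_Λ ≤ P ≤ P⁺_Λ` termwise. -/
theorem stmt0 (P : ℕ → ℕ) (Λ : Set ℤ) (hP : IsPartition P) (hΛ : IsAP Λ) :
    IsPartition (downDisp P Λ) ∧ IsPartition (upDisp P Λ) ∧
      (∀ i, downDisp P Λ i ≤ P i) ∧ (∀ i, P i ≤ upDisp P Λ i) :=
  stmt0_general P Λ hP
end

section
/- If P1 and P2 are partitions with P1 ≤ P2 termwise, then there is a finite sequence of partitions P1 = Q^0 ≤ Q^1 ≤ ⋯ ≤ Q^m = P2, with m = |P2| − |P1|, such that each adjacent pair (Q^j, Q^{j+1}) is 1-linked. -/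
/-!
`P₁` is grown towards `P₂` one box at a time, always in the first row `i` where it is still
shorter than `P₂`. Earlier rows already agree with `P₂`, so row `i` is shorter than each of
them and the new box is addable;
it lies on the diagonal `Pᵢ - i`, on which no other row ends or ends just before, so the
singleton progression `{Pᵢ - i}` displaces the partition up to the new one and back.
-/

open scoped Classical

open Function

lemma IsPartition.antitone {P : ℕ → ℕ} (hP : IsPartition P) : Antitone P :=
  antitone_nat_of_succ_le hP.1

section Psum

variable {P Q : ℕ → ℕ} {N : ℕ}

lemma psum_eq_sum_range (hN : ∀ n ≥ N, P n = 0) : psum P = ∑ i ∈ Finset.range N, P i :=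
  finsum_eq_sum_of_support_subset P fun n hn ↦
    Finset.mem_coe.2 <| Finset.mem_range.2 <| not_le.1 fun h ↦ hn (hN n h)

lemma psum_le_psum (hN : ∀ n ≥ N, Q n = 0) (hle : ∀ i, P i ≤ Q i) : psum P ≤ psum Q := by
  rw [psum_eq_sum_range fun n hn ↦ Nat.le_zero.1 (hN n hn ▸ hle n), psum_eq_sum_range hN]
  exact Finset.sum_le_sum fun i _ ↦ hle i

lemma eq_of_le_of_psum_le (hN : ∀ n ≥ N, Q n = 0) (hle : ∀ i, P i ≤ Q i)
    (hsum : psum Q ≤ psum P) : P = Q := by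
  have hPN : ∀ n ≥ N, P n = 0 := fun n hn ↦ Nat.le_zero.1 (hN n hn ▸ hle n)
  rw [psum_eq_sum_range hPN, psum_eq_sum_range hN] at hsum
  have hsum_eq := le_antisymm (Finset.sum_le_sum fun i _ ↦ hle i) hsum
  funext i
  rcases lt_or_ge i N with hi | hi
  · exact (Finset.sum_eq_sum_iff_of_le fun i _ ↦ hle i).1 hsum_eq i (Finset.mem_range.2 hi)
  · rw [hPN i hi, hN i hi]

lemma exists_lt_of_psum_lt (hle : ∀ i, P i ≤ Q i) (hsum : psum P < psum Q) :
    ∃ i, P i < Q i := by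
  by_contra! hge
  rw [funext fun i ↦ le_antisymm (hle i) (hge i)] at hsum
  exact lt_irrefl _ hsum

lemma psum_update_add_one (hN : ∀ n ≥ N, P n = 0) (i : ℕ) :
    psum (update P i (P i + 1)) = psum P + 1 := by
  have hi : i ∈ Finset.range (max N (i + 1)) := Finset.mem_range.2 (by omega)
  have hQN : ∀ n ≥ max N (i + 1), update P i (P i + 1) n = 0 := fun n hn ↦ by
    rw [update_of_ne (by omega), hN n (le_of_max_le_left hn)]
  rw [psum_eq_sum_range hQN, psum_eq_sum_range fun n hn ↦ hN n (le_of_max_le_left hn),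
    Finset.sum_update_of_mem hi, Finset.sum_eq_add_sum_sdiff_singleton_of_mem hi (f := P)]
  ring

end Psum

lemma isAP_singleton (a : ℤ) : IsAP {a} := by
  refine ⟨fun h ↦ ?_, fun b c d e hb hc hd he ↦ ⟨a, rfl, a, rfl, ?_⟩⟩
  · have : a + 1 ∈ ({a} : Set ℤ) := h ▸ Set.mem_univ _
    simp at this
  · simp only [Set.mem_singleton_iff] at hb hc hd he
    subst hb hc hd he
    ring

section Corner

variable {P : ℕ → ℕ} {i : ℕ}

lemma sub_ne_of_corner (hP : Antitone P) (hi : ∀ j < i, P i < P j) {j : ℕ} (hj : j ≠ i) :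
    (P j : ℤ) - j ≠ P i - i ∧ (P j : ℤ) - j - 1 ≠ P i - i := by
  rcases lt_or_gt_of_ne hj with hlt | hgt
  · have := hi j hlt
    omega
  · have := hP hgt.le
    omega

lemma upDisp_singleton_of_corner (hP : Antitone P) (hi : ∀ j < i, P i < P j) :
    upDisp P {(P i : ℤ) - i} = update P i (P i + 1) := by
  funext j
  by_cases hj : j = i
  · subst hj
    have hcorner : j = 0 ∨ P j < P (j - 1) := by
      rcases Nat.eq_zero_or_pos j with h0 | hpos
      · exact .inl h0
      · exact .inr (hi (j - 1) (by omega))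
    simp [upDisp, hcorner]
  · simp [upDisp, update_of_ne hj, (sub_ne_of_corner hP hi hj).1]

lemma downDisp_singleton_of_corner (hP : Antitone P) (hi : ∀ j < i, P i < P j) :
    downDisp (update P i (P i + 1)) {(P i : ℤ) - i} = P := by
  funext j
  by_cases hj : j = i
  · subst hj
    have hnext : P (j + 1) < P j + 1 := Nat.lt_succ_of_le (hP (Nat.le_succ j))
    have hdiag : (P j : ℤ) + 1 - j - 1 = P j - j := by ring
    simp [downDisp, hnext, hdiag]
  · simp [downDisp, update_of_ne hj, (sub_ne_of_corner hP hi hj).2]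

lemma IsPartition.update_of_corner (hP : IsPartition P) (hi : ∀ j < i, P i < P j) :
    IsPartition (update P i (P i + 1)) := by
  refine ⟨fun k ↦ ?_, ?_⟩
  · rcases eq_or_ne k i with rfl | hk
    · rw [update_of_ne (Nat.succ_ne_self k), update_self]
      exact Nat.le_succ_of_le (hP.1 k)
    rcases eq_or_ne (k + 1) i with rfl | hk1
    · rw [update_self, update_of_ne hk]
      exact hi k (Nat.lt_succ_self k)
    · rw [update_of_ne hk, update_of_ne hk1]
      exact hP.1 k
  · obtain ⟨N, hN⟩ := hP.2
    exact ⟨max N (i + 1), fun n hn ↦ by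
      rw [update_of_ne (by omega), hN n (le_of_max_le_left hn)]⟩

lemma IsPartition.kLinked_one_update_of_corner (hP : IsPartition P) (hi : ∀ j < i, P i < P j) :
    KLinked 1 P (update P i (P i + 1)) := by
  obtain ⟨N, hN⟩ := hP.2
  exact ⟨⟨{(P i : ℤ) - i}, isAP_singleton _, (upDisp_singleton_of_corner hP.antitone hi).symm,
    (downDisp_singleton_of_corner hP.antitone hi).symm⟩, psum_update_add_one hN i⟩

end Corner

noncomputable def growToward (P₂ P : ℕ → ℕ) : ℕ → ℕ :=
  if h : ∃ i, P i < P₂ i then update P (Nat.find h) (P (Nat.find h) + 1) else P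

section GrowToward

variable {P P₂ : ℕ → ℕ}

lemma apply_find_lt_of_lt_find (hP₂ : Antitone P₂) (hle : ∀ i, P i ≤ P₂ i) (h : ∃ i, P i < P₂ i) :
    ∀ j < Nat.find h, P (Nat.find h) < P j := fun j hj ↦
  calc P (Nat.find h) < P₂ (Nat.find h) := Nat.find_spec h
    _ ≤ P₂ j := hP₂ hj.le
    _ = P j := (le_antisymm (hle j) (not_lt.1 (Nat.find_min h hj))).symm

variable (hP : IsPartition P) (hP₂ : Antitone P₂) (hle : ∀ i, P i ≤ P₂ i)
  (h : ∃ i, P i < P₂ i)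
include hP hP₂ hle h

lemma isPartition_growToward : IsPartition (growToward P₂ P) := by
  rw [growToward, dif_pos h]
  exact hP.update_of_corner (apply_find_lt_of_lt_find hP₂ hle h)

lemma kLinked_one_growToward : KLinked 1 P (growToward P₂ P) := by
  rw [growToward, dif_pos h]
  exact hP.kLinked_one_update_of_corner (apply_find_lt_of_lt_find hP₂ hle h)

end GrowToward

lemma le_growToward (P₂ P : ℕ → ℕ) (i : ℕ) : P i ≤ growToward P₂ P i := by
  unfold growToward
  split_ifs with h
  · rcases eq_or_ne i (Nat.find h) with rfl | hi
    · simp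
    · rw [update_of_ne hi]
  · exact le_rfl

lemma growToward_le {P P₂ : ℕ → ℕ} (hle : ∀ i, P i ≤ P₂ i) (i : ℕ) :
    growToward P₂ P i ≤ P₂ i := by
  unfold growToward
  split_ifs with h
  · rcases eq_or_ne i (Nat.find h) with rfl | hi
    · simpa using Nat.find_spec h
    · rw [update_of_ne hi]
      exact hle i
  · exact hle i

lemma iterate_growToward {P₁ P₂ : ℕ → ℕ} (h₁ : IsPartition P₁) (h₂ : IsPartition P₂)
    (hle : ∀ i, P₁ i ≤ P₂ i) {j : ℕ} (hj : j ≤ psum P₂ - psum P₁) :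
    IsPartition ((growToward P₂)^[j] P₁) ∧ (∀ i, (growToward P₂)^[j] P₁ i ≤ P₂ i) ∧
      psum ((growToward P₂)^[j] P₁) = psum P₁ + j := by
  induction j with
  | zero => exact ⟨h₁, hle, rfl⟩
  | succ j ih =>
    obtain ⟨hP, hPle, hsum⟩ := ih (by omega)
    have hlt := exists_lt_of_psum_lt hPle (by omega)
    have hlinked := kLinked_one_growToward hP h₂.antitone hPle hlt
    rw [iterate_succ_apply']
    exact ⟨isPartition_growToward hP h₂.antitone hPle hlt, growToward_le hPle,
      by rw [hlinked.2, hsum, add_assoc]⟩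

/-- Any two comparable partitions are connected by a chain of 1-linked pairs of
length `|P2| - |P1|`. -/
theorem stmt3 (P1 P2 : ℕ → ℕ) (h1 : IsPartition P1) (h2 : IsPartition P2)
    (hle : ∀ i, P1 i ≤ P2 i) :
    ∃ s : ℕ → ℕ → ℕ, s 0 = P1 ∧ s (psum P2 - psum P1) = P2 ∧
      (∀ j ≤ psum P2 - psum P1, IsPartition (s j)) ∧
      (∀ j < psum P2 - psum P1, ∀ i, s j i ≤ s (j + 1) i) ∧
      (∀ j < psum P2 - psum P1, KLinked 1 (s j) (s (j + 1))) := by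
  have hsum := psum_le_psum h2.2.choose_spec hle
  have key := fun j (hj : j ≤ psum P2 - psum P1) ↦ iterate_growToward h1 h2 hle hj
  refine ⟨fun j ↦ (growToward P2)^[j] P1, rfl, ?_, fun j hj ↦ (key j hj).1,
    fun j _ i ↦ ?_, fun j hj ↦ ?_⟩
  · obtain ⟨-, hPle, hPsum⟩ := key _ le_rfl
    beta_reduce
    exact eq_of_le_of_psum_le h2.2.choose_spec hPle (by omega)
  · simpa only [iterate_succ_apply'] using le_growToward P2 _ i
  · obtain ⟨hP, hPle, hPsum⟩ := key j hj.le
    simpa only [iterate_succ_apply'] using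
      kLinked_one_growToward hP h2.antitone hPle (exists_lt_of_psum_lt hPle (by omega))
end

section
/- For any partition P, δ(P) = δ(P*), where P* is the conjugate partition. -/
open scoped Classical

/-
Conjugation transposes Young diagrams, exchanging rows and columns and negating the content
`n - m` of a cell `(m, n)`. It therefore maps the addable (removable) cells of content in `Λ`
to the addable (removable) cells of content in `-Λ`, so `(P⁺_Λ)* = (P*)⁺_{-Λ}` and
`(P⁻_Λ)* = (P*)⁻_{-Λ}`; as it also preserves `|P|` and `-Λ` is again an arithmetic progression,
it preserves `k`-linkedness. Conjugating a valid sequence from `∅` to `P` termwise gives one from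
`∅` to `P*` with the same 1-linked pairs, and conjugation is an involution.
-/

open Finset Pointwise

namespace IsPartition

variable {P : ℕ → ℕ}

lemma antitone_s7 (hP : IsPartition P) : Antitone P := antitone_nat_of_succ_le hP.1

lemma exists_le (hP : IsPartition P) (n : ℕ) : ∃ m, P m ≤ n := by
  obtain ⟨N, hN⟩ := hP.2
  exact ⟨N, (hN N le_rfl).le.trans n.zero_le⟩

lemma setOf_lt_eq_Iio (hP : IsPartition P) (n : ℕ) :
    {m | n < P m} = Set.Iio (Nat.find (hP.exists_le n)) := by
  ext m
  simp only [Set.mem_ofPred_eq, Set.mem_Iio, Nat.lt_find_iff, not_le]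
  exact ⟨fun h k hk => h.trans_le (hP.antitone_s7 hk), fun h => h m le_rfl⟩

end IsPartition

section Conjugation

variable {P Q : ℕ → ℕ}

lemma lt_conj_iff (hP : IsPartition P) {m n : ℕ} : m < conj P n ↔ n < P m := by
  rw [conj, hP.setOf_lt_eq_Iio, Set.ncard_Iio_nat, ← Set.mem_Iio, ← hP.setOf_lt_eq_Iio]
  rfl

lemma conj_eq_of_lt_iff (h : ∀ m n, m < Q n ↔ n < P m) : conj P = Q := by
  funext n
  simp_rw [conj, ← h]
  exact Set.ncard_Iio_nat _

lemma conj_zero : conj (fun _ => 0) = fun _ => 0 :=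
  conj_eq_of_lt_iff fun _ _ => by simp

lemma conj_conj (hP : IsPartition P) : conj (conj P) = P :=
  conj_eq_of_lt_iff fun _ _ => (lt_conj_iff hP).symm

lemma conj_eq_zero_of_le (hP : IsPartition P) {n : ℕ} (hn : P 0 ≤ n) : conj P n = 0 := by
  by_contra h
  have := (lt_conj_iff hP).1 (Nat.pos_of_ne_zero h)
  omega

lemma conj_le_of_eq_zero (hP : IsPartition P) {N : ℕ} (hN : P N = 0) (n : ℕ) : conj P n ≤ N := by
  by_contra h
  have := (lt_conj_iff hP).1 (not_le.1 h)
  omega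

lemma IsPartition.conj (hP : IsPartition P) : IsPartition (conj P) :=
  ⟨fun _ => le_of_forall_lt fun _ hm =>
      (lt_conj_iff hP).2 (Nat.lt_of_succ_lt ((lt_conj_iff hP).1 hm)),
    ⟨P 0, fun _ => conj_eq_zero_of_le hP⟩⟩

lemma psum_eq_sum_Iio {N : ℕ} (hN : ∀ m ≥ N, P m = 0) : psum P = ∑ m ∈ Iio N, P m :=
  finsum_eq_sum_of_support_subset _ fun m hm => by
    simp only [coe_Iio, Set.mem_Iio]
    by_contra h
    exact hm (hN m (not_lt.1 h))

lemma card_filter_Iio_lt {B k : ℕ} (hk : k ≤ B) : #{n ∈ Iio B | n < k} = k := by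
  simp [hk]

lemma psum_conj (hP : IsPartition P) : psum (conj P) = psum P := by
  obtain ⟨N, hN⟩ := hP.2
  calc psum (conj P) = ∑ n ∈ Iio (P 0), conj P n := psum_eq_sum_Iio fun _ => conj_eq_zero_of_le hP
    _ = ∑ n ∈ Iio (P 0), #{m ∈ Iio N | n < P m} := by
      refine sum_congr rfl fun n _ => ?_
      rw [← card_filter_Iio_lt (conj_le_of_eq_zero hP (hN N le_rfl) n)]
      simp_rw [lt_conj_iff hP]
    _ = ∑ m ∈ Iio N, #{n ∈ Iio (P 0) | n < P m} :=
      (sum_card_bipartiteAbove_eq_sum_card_bipartiteBelow _).symm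
    _ = ∑ m ∈ Iio N, P m :=
      sum_congr rfl fun m _ => card_filter_Iio_lt (hP.antitone_s7 m.zero_le)
    _ = psum P := (psum_eq_sum_Iio hN).symm

/- The cells of the Young diagram of `P` are the pairs `(m, n)` (row `m`, column `n`) with
`n < P m`; conjugation transposes them. -/
def IsAddable (P : ℕ → ℕ) (m n : ℕ) : Prop :=
  ¬ n < P m ∧ (n = 0 ∨ n - 1 < P m) ∧ (m = 0 ∨ n < P (m - 1))

def IsRemovable (P : ℕ → ℕ) (m n : ℕ) : Prop :=
  n < P m ∧ ¬ n + 1 < P m ∧ ¬ n < P (m + 1)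

lemma isAddable_conj_iff (hP : IsPartition P) {m n : ℕ} :
    IsAddable (conj P) n m ↔ IsAddable P m n := by
  simp only [IsAddable, lt_conj_iff hP]
  tauto

lemma isRemovable_conj_iff (hP : IsPartition P) {m n : ℕ} :
    IsRemovable (conj P) n m ↔ IsRemovable P m n := by
  simp only [IsRemovable, lt_conj_iff hP]
  tauto

lemma lt_upDisp_iff (Λ : Set ℤ) (m n : ℕ) :
    n < upDisp P Λ m ↔ n < P m ∨ (IsAddable P m n ∧ (n : ℤ) - m ∈ Λ) := by
  unfold upDisp IsAddable
  split_ifs <;> grind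

lemma lt_downDisp_iff (Λ : Set ℤ) (m n : ℕ) :
    n < downDisp P Λ m ↔ n < P m ∧ ¬ (IsRemovable P m n ∧ (n : ℤ) - m ∈ Λ) := by
  unfold downDisp IsRemovable
  split_ifs <;> grind

lemma conj_upDisp (hP : IsPartition P) (Λ : Set ℤ) :
    conj (upDisp P Λ) = upDisp (conj P) (-Λ) :=
  conj_eq_of_lt_iff fun m n => by
    rw [lt_upDisp_iff, lt_upDisp_iff, lt_conj_iff hP, isAddable_conj_iff hP, Set.mem_neg, neg_sub]

lemma conj_downDisp (hP : IsPartition P) (Λ : Set ℤ) :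
    conj (downDisp P Λ) = downDisp (conj P) (-Λ) :=
  conj_eq_of_lt_iff fun m n => by
    rw [lt_downDisp_iff, lt_downDisp_iff, lt_conj_iff hP, isRemovable_conj_iff hP, Set.mem_neg,
      neg_sub]

lemma IsAP.neg {Λ : Set ℤ} (hΛ : IsAP Λ) : IsAP (-Λ) := by
  refine ⟨fun h => hΛ.1 (by rw [← neg_neg Λ, h, Set.neg_univ]), fun a b c d ha hb hc hd => ?_⟩
  obtain ⟨x, hx, y, hy, hxy⟩ := hΛ.2 _ _ _ _ hb ha hd hc
  exact ⟨-y, by rwa [Set.mem_neg, neg_neg], -x, by rwa [Set.mem_neg, neg_neg], by linarith⟩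

lemma KLinked.conj {k : ℕ} (hP : IsPartition P) (hQ : IsPartition Q) (h : KLinked k P Q) :
    KLinked k (conj P) (conj Q) := by
  obtain ⟨⟨Λ, hΛ, rfl, hdown⟩, hsum⟩ := h
  refine ⟨⟨-Λ, hΛ.neg, conj_upDisp hP Λ, ?_⟩, by rw [psum_conj hP, psum_conj hQ, hsum]⟩
  rw [← conj_downDisp hQ, ← hdown]

lemma kLinked_conj_iff {k : ℕ} (hP : IsPartition P) (hQ : IsPartition Q) :
    KLinked k (conj P) (conj Q) ↔ KLinked k P Q := by
  refine ⟨fun h => ?_, KLinked.conj hP hQ⟩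
  simpa only [conj_conj hP, conj_conj hQ] using h.conj hP.conj hQ.conj

lemma ValidSeq.conj {n : ℕ} {s : ℕ → ℕ → ℕ} (hs : ValidSeq n s) :
    ValidSeq n fun j => conj (s j) := by
  refine ⟨fun j hj => (hs.1 j hj).conj, fun j hj => ?_⟩
  have hj' := hs.1 j hj.le
  have hj'' := hs.1 (j + 1) hj
  exact (hs.2 j hj).imp (KLinked.conj hj' hj'') (KLinked.conj hj' hj'')

def oneLinkedCounts (P : ℕ → ℕ) : Set ℕ :=
  { c | ∃ n s, ValidSeq n s ∧ s 0 = (fun _ => 0) ∧ s n = P ∧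
    c = ((Finset.range n).filter fun j => KLinked 1 (s j) (s (j + 1))).card }

lemma oneLinkedCounts_subset_conj (P : ℕ → ℕ) :
    oneLinkedCounts P ⊆ oneLinkedCounts (conj P) := by
  rintro c ⟨n, s, hs, h0, hn, rfl⟩
  refine ⟨n, fun j => conj (s j), hs.conj, h0 ▸ conj_zero, congrArg conj hn, ?_⟩
  congr 1
  refine filter_congr fun j hj => ?_
  have hj := mem_range.1 hj
  exact (kLinked_conj_iff (hs.1 j hj.le) (hs.1 (j + 1) hj)).symm

lemma oneLinkedCounts_conj (hP : IsPartition P) :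
    oneLinkedCounts (conj P) = oneLinkedCounts P := by
  have h := oneLinkedCounts_subset_conj (conj P)
  rw [conj_conj hP] at h
  exact h.antisymm (oneLinkedCounts_subset_conj P)

end Conjugation

/-- The difficulty is invariant under conjugation: `δ(P) = δ(P*)`. -/
theorem stmt7 (P : ℕ → ℕ) (hP : IsPartition P) :
    delta (conj P) = delta P :=
  congrArg sInf (oneLinkedCounts_conj hP)
end

section
/- Let a ≥ 2 be even, k ≥ 1, and 1 ≤ i ≤ a/2. Let P_{k,i} be the partition (a^k, i + a/2, i), i.e. k parts equal to a followed by a part i + a/2 and a part i. Let Λ_{k,i} = {n ∈ ℤ : n ≡ i − k − 2 (mod a/2 + 1)}. Then the downward displacement of P_{k,i} with respect to Λ_{k,i} equals P_{k,i−1} = (a^k, (i−1) + a/2, i−1); and the upward displacement of P_{k,i} with respect to Λ_{k,i} equals P_{k,i} unless a ≡ i − k − 2 (mod a/2 + 1). -/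
open scoped Classical

/-!
Only a part at a descent can move down, and only `P_0` or a part right after a descent can move
up; for `(a^k, i + a/2, i)` these are the parts at `0` and at `k - 1, …, k + 2`. With
`q = a/2 + 1`, `r = i - k - 2` and `a = 2q - 2` (as `a` is even), the numbers tested against
`Λ = r + qℤ` are `r + 2q - i`, `r + q`, `r` at `j = k - 1, k, k + 1` for the downward
displacement, and `a`, `r + q + 1`, `r + 1`, `r - i` at `j = 0, k, k + 1, k + 2` for the upward
one. Since `0 < i < q`, exactly the parts at `k` and `k + 1` move down, and only `P_0 = a` could
move up.
-/

theorem Int.not_modEq_of_sub_eq_add_mul {x y n c : ℤ} (t : ℤ) (h : y - x = c + n * t)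
    (hc : 0 < c) (hcn : c < n) : ¬ x ≡ y [ZMOD n] := by
  intro hxy
  have hdvd : n ∣ c := by
    have := dvd_sub (Int.modEq_iff_dvd.1 hxy) (dvd_mul_right n t)
    rwa [h, add_sub_cancel_right] at this
  exact absurd (Int.le_of_dvd hc hdvd) (not_le.2 hcn)

section Displacement

variable {P : ℕ → ℕ} {Λ : Set ℤ} {j : ℕ}

theorem downDisp_apply_of_le (h : P j ≤ P (j + 1)) : downDisp P Λ j = P j :=
  if_neg fun hj => (not_lt.2 h) hj.2

theorem downDisp_apply_of_notMem (h : (P j : ℤ) - j - 1 ∉ Λ) : downDisp P Λ j = P j :=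
  if_neg fun hj => h hj.1

theorem downDisp_apply_of_mem (h : (P j : ℤ) - j - 1 ∈ Λ) (hlt : P (j + 1) < P j) :
    downDisp P Λ j = P j - 1 :=
  if_pos ⟨h, hlt⟩

theorem upDisp_apply_of_le (hj : j ≠ 0) (h : P (j - 1) ≤ P j) : upDisp P Λ j = P j :=
  if_neg fun hj' => hj'.2.elim hj (not_lt.2 h)

theorem upDisp_apply_of_notMem (h : (P j : ℤ) - j ∉ Λ) : upDisp P Λ j = P j :=
  if_neg fun hj => h hj.1

end Displacement

section IntermediatePartition

variable (a k i : ℕ)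

def intermediatePartition : ℕ → ℕ := fun n =>
  if n < k then a else if n = k then i + a / 2 else if n = k + 1 then i else 0

def intermediateProgression : Set ℤ :=
  {n : ℤ | n ≡ (i : ℤ) - k - 2 [ZMOD ((a / 2 : ℕ) : ℤ) + 1]}

variable {a k i}

theorem intermediatePartition_of_lt {n : ℕ} (h : n < k) : intermediatePartition a k i n = a :=
  if_pos h

theorem intermediatePartition_self : intermediatePartition a k i k = i + a / 2 := by
  simp [intermediatePartition]

theorem intermediatePartition_succ_self : intermediatePartition a k i (k + 1) = i := by
  simp [intermediatePartition]

theorem intermediatePartition_of_add_two_le {n : ℕ} (h : k + 2 ≤ n) :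
    intermediatePartition a k i n = 0 := by
  simp [intermediatePartition, show ¬n < k by omega, show n ≠ k by omega,
    show n ≠ k + 1 by omega]

theorem mem_intermediateProgression {x : ℤ} :
    x ∈ intermediateProgression a k i ↔ x ≡ (i : ℤ) - k - 2 [ZMOD ((a / 2 : ℕ) : ℤ) + 1] :=
  Iff.rfl

theorem downDisp_intermediatePartition (ha : Even a) (hi1 : 1 ≤ i) (hi2 : i ≤ a / 2) :
    downDisp (intermediatePartition a k i) (intermediateProgression a k i) =
      intermediatePartition a k (i - 1) := by
  have ha2 : a = 2 * (a / 2) := (Nat.two_mul_div_two_of_even ha).symm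
  funext n
  rcases lt_trichotomy (n + 1) k with hn | rfl | hn
  · have hn' : n < k := n.lt_succ_self.trans hn
    rw [downDisp_apply_of_le] <;>
      simp only [intermediatePartition_of_lt hn, intermediatePartition_of_lt hn', le_refl]
  · rw [downDisp_apply_of_notMem] <;> simp only [intermediatePartition_of_lt n.lt_succ_self]
    rw [mem_intermediateProgression]
    exact Int.not_modEq_of_sub_eq_add_mul (c := i) (-2) (by push_cast; omega) (by omega)
      (by omega)
  obtain rfl | rfl | hn := (show n = k ∨ n = k + 1 ∨ k + 2 ≤ n by omega)
  · rw [downDisp_apply_of_mem] <;>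
      simp only [intermediatePartition_self, intermediatePartition_succ_self]
    · omega
    · rw [mem_intermediateProgression, Int.modEq_iff_add_fac]
      exact ⟨-1, by push_cast; ring⟩
    · omega
  · rw [downDisp_apply_of_mem] <;>
      simp only [intermediatePartition_succ_self, intermediatePartition_of_add_two_le le_rfl]
    · rw [mem_intermediateProgression, Int.modEq_iff_add_fac]
      exact ⟨0, by push_cast; ring⟩
    · omega
  · rw [downDisp_apply_of_le] <;>
      simp only [intermediatePartition_of_add_two_le hn, intermediatePartition_of_add_two_le
        (hn.trans n.le_succ), le_refl]

theorem upDisp_intermediatePartition (hi1 : 1 ≤ i) (hi2 : i ≤ a / 2)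
    (ha : ¬(a : ℤ) ≡ (i : ℤ) - k - 2 [ZMOD ((a / 2 : ℕ) : ℤ) + 1]) :
    upDisp (intermediatePartition a k i) (intermediateProgression a k i) =
      intermediatePartition a k i := by
  funext n
  rcases lt_or_ge n k with hn | hn
  · rcases Nat.eq_zero_or_pos n with rfl | hn0
    · rw [upDisp_apply_of_notMem]
      rwa [mem_intermediateProgression, intermediatePartition_of_lt hn, Nat.cast_zero, sub_zero]
    · rw [upDisp_apply_of_le hn0.ne']
      simp only [intermediatePartition_of_lt hn, intermediatePartition_of_lt
        ((n.sub_le 1).trans_lt hn), le_refl]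
  obtain rfl | rfl | rfl | hn := (show n = k ∨ n = k + 1 ∨ n = k + 2 ∨ k + 3 ≤ n by omega)
  · apply upDisp_apply_of_notMem
    rw [mem_intermediateProgression, intermediatePartition_self]
    exact Int.not_modEq_of_sub_eq_add_mul (c := ((a / 2 : ℕ) : ℤ)) (-2) (by push_cast; ring)
      (by omega) (by omega)
  · apply upDisp_apply_of_notMem
    rw [mem_intermediateProgression, intermediatePartition_succ_self]
    exact Int.not_modEq_of_sub_eq_add_mul (c := ((a / 2 : ℕ) : ℤ)) (-1) (by push_cast; ring)
      (by omega) (by omega)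
  · apply upDisp_apply_of_notMem
    rw [mem_intermediateProgression, intermediatePartition_of_add_two_le le_rfl]
    exact Int.not_modEq_of_sub_eq_add_mul (c := i) 0 (by push_cast; ring) (by omega) (by omega)
  · rw [upDisp_apply_of_le (by omega)]
    simp only [intermediatePartition_of_add_two_le (show k + 2 ≤ n - 1 by omega),
        intermediatePartition_of_add_two_le (show k + 2 ≤ n by omega), le_refl]

end IntermediatePartition

theorem stmt15_general (a k i : ℕ) (haeven : Even a) (hi1 : 1 ≤ i) (hi2 : i ≤ a / 2) :
    let Pki : ℕ → ℕ := fun n =>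
      if n < k then a else if n = k then i + a / 2 else if n = k + 1 then i else 0
    let Λ : Set ℤ := {n : ℤ | n ≡ (i : ℤ) - k - 2 [ZMOD ((a / 2 : ℕ) : ℤ) + 1]}
    downDisp Pki Λ = (fun n =>
      if n < k then a else if n = k then (i - 1) + a / 2 else if n = k + 1 then i - 1 else 0) ∧
      (¬ ((a : ℤ) ≡ (i : ℤ) - k - 2 [ZMOD ((a / 2 : ℕ) : ℤ) + 1]) → upDisp Pki Λ = Pki) :=
  ⟨downDisp_intermediatePartition haeven hi1 hi2, upDisp_intermediatePartition hi1 hi2⟩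

/-- Displacement of the intermediate partitions `P_{k,i} = (a^k, i + a/2, i)` along
`Λ_{k,i} = {n ≡ i - k - 2 mod (a/2 + 1)}`: the downward displacement is `P_{k,i-1}`,
and the upward displacement is `P_{k,i}` unless `a ≡ i - k - 2 mod (a/2 + 1)`. -/
theorem stmt15 (a k i : ℕ) (ha2 : 2 ≤ a) (haeven : Even a) (hk : 1 ≤ k)
    (hi1 : 1 ≤ i) (hi2 : i ≤ a / 2) :
    let Pki : ℕ → ℕ := fun n =>
      if n < k then a else if n = k then i + a / 2 else if n = k + 1 then i else 0
    let Λ : Set ℤ := {n : ℤ | n ≡ (i : ℤ) - k - 2 [ZMOD ((a / 2 : ℕ) : ℤ) + 1]}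
    downDisp Pki Λ = (fun n =>
      if n < k then a else if n = k then (i - 1) + a / 2 else if n = k + 1 then i - 1 else 0) ∧
      (¬ ((a : ℤ) ≡ (i : ℤ) - k - 2 [ZMOD ((a / 2 : ℕ) : ℤ) + 1]) → upDisp Pki Λ = Pki) :=
  stmt15_general a k i haeven hi1 hi2
end
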